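/- Let x and y be vectors in R^d with non-negative components, and let μ_x = Σ_i x_i δ_{log x_i}, μ_y = Σ_i y_i δ_{log y_i} be the associated measures (summing over nonzero coordinates). If μ_x[t, ∞) ≤ μ_y[t, ∞) for all real t, then x is submajorized by y (x ≺_w y). -/
import Mathlib

open scoped BigOperators

noncomputable def kMaxSum {ι : Type*} (f : ι → ℝ) (k : ℕ) : ℝ :=
  sSup {t : ℝ | ∃ A : Finset ι, A.card = k ∧ ∑ i ∈ A, f i = t}

def Submaj {ι κ : Type*} (f : ι → ℝ) (g : κ → ℝ) : Prop :=
  ∀ k : ℕ, kMaxSum f k ≤ kMaxSum g k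

lemma kMaxSum_eq {d : ℕ} (f : Fin d → ℝ) (k : ℕ) :
    kMaxSum f k =
      sSup ((((Finset.univ : Finset (Fin d)).powersetCard k).image
        (fun A => ∑ i ∈ A, f i) : Finset ℝ) : Set ℝ) := by
  unfold kMaxSum
  congr 1
  ext t
  simp only [Finset.coe_image, Set.mem_image, Finset.mem_coe, Finset.mem_powersetCard,
    Set.mem_setOf_eq]
  constructor
  · rintro ⟨A, hA, rfl⟩; exact ⟨A, ⟨Finset.subset_univ _, hA⟩, rfl⟩
  · rintro ⟨A, ⟨-, hA⟩, rfl⟩; exact ⟨A, hA, rfl⟩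

lemma le_kMaxSum {d : ℕ} (f : Fin d → ℝ) {k : ℕ} {A : Finset (Fin d)} (hA : A.card = k) :
    ∑ i ∈ A, f i ≤ kMaxSum f k := by
  rw [kMaxSum_eq]
  refine le_csSup (Finset.bddAbove _) ?_
  simp only [Finset.coe_image, Set.mem_image, Finset.mem_coe, Finset.mem_powersetCard]
  exact ⟨A, ⟨Finset.subset_univ _, hA⟩, rfl⟩

lemma exists_kMaxSum {d : ℕ} (f : Fin d → ℝ) {k : ℕ} (hk : k ≤ d) :
    ∃ A : Finset (Fin d), A.card = k ∧ ∑ i ∈ A, f i = kMaxSum f k := by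
  have hne : ((((Finset.univ : Finset (Fin d)).powersetCard k).image
      (fun A => ∑ i ∈ A, f i)) : Finset ℝ).Nonempty := by
    refine Finset.Nonempty.image ?_ _
    rw [Finset.powersetCard_nonempty]
    simpa using hk
  have := hne.csSup_mem
  rw [← kMaxSum_eq] at this
  simp only [Finset.mem_image, Finset.mem_powersetCard] at this
  obtain ⟨A, ⟨-, hA⟩, hs⟩ := this
  exact ⟨A, hA, hs⟩

lemma kMaxSum_zero {d : ℕ} (f : Fin d → ℝ) : kMaxSum f 0 = 0 := by
  rw [kMaxSum_eq]
  simp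

lemma kMaxSum_of_gt {d : ℕ} (f : Fin d → ℝ) {k : ℕ} (hk : d < k) : kMaxSum f k = 0 := by
  rw [kMaxSum_eq]
  rw [Finset.powersetCard_eq_empty.2 (by simpa using hk)]
  simp [Real.sSup_empty]

lemma kMaxSum_mono {d : ℕ} (f : Fin d → ℝ) (hf : ∀ i, 0 ≤ f i) {k l : ℕ}
    (hkl : k ≤ l) (hl : l ≤ d) : kMaxSum f k ≤ kMaxSum f l := by
  obtain ⟨A, hA, hs⟩ := exists_kMaxSum f (hkl.trans hl)
  obtain ⟨B, hAB, -, hB⟩ := Finset.exists_subsuperset_card_eq (Finset.subset_univ A)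
    (by simpa [hA] using hkl) (by simpa using hl)
  calc kMaxSum f k = ∑ i ∈ A, f i := hs.symm
    _ ≤ ∑ i ∈ B, f i := Finset.sum_le_sum_of_subset_of_nonneg hAB (fun i _ _ => hf i)
    _ ≤ kMaxSum f l := le_kMaxSum f hB

/-- If the tails of the associated measures satisfy
`μ_x[t,∞) = ∑_{i : x_i ≥ e^t} x_i ≤ ∑_{i : y_i ≥ e^t} y_i = μ_y[t,∞)` for all real `t`,
then `x ≺_w y`. -/
theorem submajorization_of_measure_tails {d : ℕ} (x y : Fin d → ℝ)
    (hx : ∀ i, 0 ≤ x i) (hy : ∀ i, 0 ≤ y i)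
    (h : ∀ t : ℝ,
      ∑ i ∈ Finset.univ.filter (fun i => Real.exp t ≤ x i), x i ≤
      ∑ i ∈ Finset.univ.filter (fun i => Real.exp t ≤ y i), y i) :
    Submaj x y := by
  intro k
  induction k with
  | zero => rw [kMaxSum_zero, kMaxSum_zero]
  | succ k IH =>
    by_contra hlt
    push_neg at hlt
    rcases le_or_gt (k + 1) d with hkd | hkd
    swap
    · rw [kMaxSum_of_gt x hkd, kMaxSum_of_gt y hkd] at hlt
      exact lt_irrefl 0 hlt
    obtain ⟨A, hA, hsA⟩ := exists_kMaxSum x hkd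
    have hAne : A.Nonempty := Finset.card_pos.1 (by omega)
    obtain ⟨i0, hi0A, hi0min⟩ := A.exists_min_image x hAne
    set α := x i0 with hα
    have hupper : kMaxSum x (k + 1) ≤ kMaxSum y k + α := by
      have h1 : ∑ i ∈ A.erase i0, x i ≤ kMaxSum x k := by
        refine le_kMaxSum x ?_
        rw [Finset.card_erase_of_mem hi0A, hA]
        omega
      have h2 : ∑ i ∈ A, x i = ∑ i ∈ A.erase i0, x i + α :=
        (Finset.sum_erase_add A x hi0A).symm
      have := IH
      linarith [hsA]
    rcases le_or_gt α 0 with hα0 | hα0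
    · have hα0' : α = 0 := le_antisymm hα0 (hx i0)
      have : kMaxSum y k ≤ kMaxSum y (k + 1) :=
        kMaxSum_mono y hy (Nat.le_succ k) hkd
      linarith
    · set t := Real.log α with ht
      have het : Real.exp t = α := Real.exp_log hα0
      have hμ := h t
      rw [het] at hμ
      set B := Finset.univ.filter (fun i => α ≤ y i) with hB
      have hxμ : kMaxSum x (k + 1) ≤ ∑ i ∈ B, y i := by
        calc kMaxSum x (k + 1) = ∑ i ∈ A, x i := hsA.symm
          _ ≤ ∑ i ∈ Finset.univ.filter (fun i => α ≤ x i), x i := by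
              refine Finset.sum_le_sum_of_subset_of_nonneg ?_ (fun i _ _ => hx i)
              intro i hi
              simp only [Finset.mem_filter, Finset.mem_univ, true_and]
              exact hi0min i hi
          _ ≤ ∑ i ∈ B, y i := hμ
      rcases le_or_gt B.card (k + 1) with hc | hc
      · have : ∑ i ∈ B, y i ≤ kMaxSum y B.card := le_kMaxSum y rfl
        have : kMaxSum y B.card ≤ kMaxSum y (k + 1) := kMaxSum_mono y hy hc hkd
        linarith [le_kMaxSum y (rfl : B.card = B.card)]
      · obtain ⟨C, hC, hsC⟩ := exists_kMaxSum y (k := k) (by omega)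
        have hnsub : ¬ B ⊆ C := fun hsub => absurd (Finset.card_le_card hsub) (by omega)
        obtain ⟨j, hjB, hjC⟩ := Finset.not_subset.1 hnsub
        have hαj : α ≤ y j := by
          rw [hB] at hjB
          exact (Finset.mem_filter.1 hjB).2
        have hins : ∑ i ∈ insert j C, y i = y j + ∑ i ∈ C, y i :=
          Finset.sum_insert hjC
        have hcard : (insert j C).card = k + 1 := by
          rw [Finset.card_insert_of_notMem hjC, hC]
        have := le_kMaxSum y hcard
        linarith
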